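/- Let w : ℝ × ℝ → ℝ be a smooth solution of the modified SK–KK equation. Then the function u := (1/6)(∂_x w − w^2) is a smooth solution of the SK equation: that is, u_t + u_{xxxxx} + 30(u u_{xxx} + u_x u_{xx}) + 180 u^2 u_x = 0 at every point (x,t) ∈ ℝ². -/

import Mathlib

/-- Partial derivative in the first (space) variable. -/
noncomputable def pdx (u : ℝ × ℝ → ℝ) : ℝ × ℝ → ℝ :=
  fun p => deriv (fun x => u (x, p.2)) p.1

/-- Partial derivative in the second (time) variable. -/
noncomputable def pdt (u : ℝ × ℝ → ℝ) : ℝ × ℝ → ℝ :=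
  fun p => deriv (fun t => u (p.1, t)) p.2

/-- The Miura transformation `u = (1/6)(w_x − w²)` towards the SK equation. -/
noncomputable def miuraSK (w : ℝ × ℝ → ℝ) : ℝ × ℝ → ℝ :=
  fun p => (1 / 6) * (pdx w p - (w p) ^ 2)

open Function

lemma pdx_eq_fderiv (f : ℝ × ℝ → ℝ) (hf : Differentiable ℝ f) (p : ℝ × ℝ) :
    pdx f p = fderiv ℝ f p (1, 0) := by
  have h1 : HasDerivAt (fun x : ℝ => ((x, p.2) : ℝ × ℝ)) ((1 : ℝ), (0 : ℝ)) p.1 :=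
    (hasDerivAt_id p.1).prodMk (hasDerivAt_const p.1 p.2)
  exact ((hf p).hasFDerivAt.comp_hasDerivAt p.1 h1).deriv

lemma pdt_eq_fderiv (f : ℝ × ℝ → ℝ) (hf : Differentiable ℝ f) (p : ℝ × ℝ) :
    pdt f p = fderiv ℝ f p (0, 1) := by
  have h1 : HasDerivAt (fun s : ℝ => ((p.1, s) : ℝ × ℝ)) ((0 : ℝ), (1 : ℝ)) p.2 :=
    (hasDerivAt_const p.2 p.1).prodMk (hasDerivAt_id p.2)
  exact ((hf p).hasFDerivAt.comp_hasDerivAt p.2 h1).deriv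

lemma contDiff_pdx_top (f : ℝ × ℝ → ℝ) (hf : ContDiff ℝ (⊤ : ℕ∞) f) : ContDiff ℝ (⊤ : ℕ∞) (pdx f) := by
  rw [funext (pdx_eq_fderiv f (hf.differentiable (by simp)))]
  exact (hf.fderiv_right (by simp)).clm_apply contDiff_const

lemma contDiff_pdt_top (f : ℝ × ℝ → ℝ) (hf : ContDiff ℝ (⊤ : ℕ∞) f) : ContDiff ℝ (⊤ : ℕ∞) (pdt f) := by
  rw [funext (pdt_eq_fderiv f (hf.differentiable (by simp)))]
  exact (hf.fderiv_right (by simp)).clm_apply contDiff_const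

lemma clairaut (w : ℝ × ℝ → ℝ) (hw : ContDiff ℝ (⊤ : ℕ∞) w) (p : ℝ × ℝ) :
    pdt (pdx w) p = pdx (pdt w) p := by
  have hd : Differentiable ℝ w := hw.differentiable (by simp)
  have hf' : ContDiff ℝ (⊤ : ℕ∞) (fderiv ℝ w) := hw.fderiv_right (by simp)
  have hx : HasFDerivAt (fderiv ℝ w) (fderiv ℝ (fderiv ℝ w) p) p :=
    (hf'.differentiable (by simp) p).hasFDerivAt
  have hsymm := second_derivative_symmetric (f := w) (fun y => (hd y).hasFDerivAt) hx
  have h1 : HasFDerivAt (pdx w)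
      ((ContinuousLinearMap.apply ℝ ℝ ((1 : ℝ), (0 : ℝ))).comp (fderiv ℝ (fderiv ℝ w) p)) p := by
    rw [funext (pdx_eq_fderiv w hd)]
    exact (ContinuousLinearMap.apply ℝ ℝ ((1 : ℝ), (0 : ℝ))).hasFDerivAt.comp p hx
  have h2 : HasFDerivAt (pdt w)
      ((ContinuousLinearMap.apply ℝ ℝ ((0 : ℝ), (1 : ℝ))).comp (fderiv ℝ (fderiv ℝ w) p)) p := by
    rw [funext (pdt_eq_fderiv w hd)]
    exact (ContinuousLinearMap.apply ℝ ℝ ((0 : ℝ), (1 : ℝ))).hasFDerivAt.comp p hx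
  have e1 : pdt (pdx w) p = fderiv ℝ (fderiv ℝ w) p (0, 1) (1, 0) := by
    rw [pdt_eq_fderiv (pdx w) ((contDiff_pdx_top w hw).differentiable (by simp)) p, h1.fderiv]
    rfl
  have e2 : pdx (pdt w) p = fderiv ℝ (fderiv ℝ w) p (1, 0) (0, 1) := by
    rw [pdx_eq_fderiv (pdt w) ((contDiff_pdt_top w hw).differentiable (by simp)) p, h2.fderiv]
    rfl
  rw [e1, e2, hsymm]

lemma pdx_iter_slice (f : ℝ × ℝ → ℝ) (k : ℕ) (x t : ℝ) :
    pdx^[k] f (x, t) = deriv^[k] (fun y => f (y, t)) x := by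
  induction k generalizing x with
  | zero => rfl
  | succ k ih =>
    rw [Function.iterate_succ_apply', Function.iterate_succ_apply']
    show deriv (fun y => pdx^[k] f (y, t)) x = _
    congr 1
    funext y
    exact ih y

lemma aux_chain (g : ℝ → ℝ) (hg : ContDiff ℝ (⊤ : ℕ∞) g) :
    (∀ x, deriv (fun y => (1/6 : ℝ) * (deriv g y) + (-1/6 : ℝ) * (g y * g y)) x = (1/6 : ℝ) * (deriv^[2] g x) + (-1/3 : ℝ) * (g x * deriv g x)) ∧
    (∀ x, deriv^[2] (fun y => (1/6 : ℝ) * (deriv g y) + (-1/6 : ℝ) * (g y * g y)) x = (1/6 : ℝ) * (deriv^[3] g x) + (-1/3 : ℝ) * (deriv g x * deriv g x) + (-1/3 : ℝ) * (g x * deriv^[2] g x)) ∧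
    (∀ x, deriv^[3] (fun y => (1/6 : ℝ) * (deriv g y) + (-1/6 : ℝ) * (g y * g y)) x = (1/6 : ℝ) * (deriv^[4] g x) + (-1 : ℝ) * (deriv g x * deriv^[2] g x) + (-1/3 : ℝ) * (g x * deriv^[3] g x)) ∧
    (∀ x, deriv^[5] (fun y => (1/6 : ℝ) * (deriv g y) + (-1/6 : ℝ) * (g y * g y)) x = (1/6 : ℝ) * (deriv^[6] g x) + (-10/3 : ℝ) * (deriv^[2] g x * deriv^[3] g x) + (-5/3 : ℝ) * (deriv g x * deriv^[4] g x) + (-1/3 : ℝ) * (g x * deriv^[5] g x)) ∧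
    (∀ x, deriv (fun y => (5 : ℝ) * (deriv g y * deriv^[2] g y) + (5 : ℝ) * (g y * deriv g y * deriv g y) + (5 : ℝ) * (g y * g y * deriv^[2] g y) + (-1 : ℝ) * (g y * g y * g y * g y * g y)) x = (5 : ℝ) * (deriv^[2] g x * deriv^[2] g x) + (5 : ℝ) * (deriv g x * deriv^[3] g x) + (5 : ℝ) * (deriv g x * deriv g x * deriv g x) + (20 : ℝ) * (g x * deriv g x * deriv^[2] g x) + (5 : ℝ) * (g x * g x * deriv^[3] g x) + (-5 : ℝ) * (g x * g x * g x * g x * deriv g x)) ∧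
    (∀ x, deriv (fun y => (-1 : ℝ) * (deriv^[5] g y) + (5 : ℝ) * (deriv^[2] g y * deriv^[2] g y) + (5 : ℝ) * (deriv g y * deriv^[3] g y) + (5 : ℝ) * (deriv g y * deriv g y * deriv g y) + (20 : ℝ) * (g y * deriv g y * deriv^[2] g y) + (5 : ℝ) * (g y * g y * deriv^[3] g y) + (-5 : ℝ) * (g y * g y * g y * g y * deriv g y)) x = (-1 : ℝ) * (deriv^[6] g x) + (15 : ℝ) * (deriv^[2] g x * deriv^[3] g x) + (5 : ℝ) * (deriv g x * deriv^[4] g x) + (35 : ℝ) * (deriv g x * deriv g x * deriv^[2] g x) + (20 : ℝ) * (g x * deriv^[2] g x * deriv^[2] g x) + (30 : ℝ) * (g x * deriv g x * deriv^[3] g x) + (5 : ℝ) * (g x * g x * deriv^[4] g x) + (-20 : ℝ) * (g x * g x * g x * deriv g x * deriv g x) + (-5 : ℝ) * (g x * g x * g x * g x * deriv^[2] g x)) := by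
  have hD : ∀ (k : ℕ) (z : ℝ), HasDerivAt (deriv^[k] g) (deriv^[k+1] g z) z := by
    intro k z
    rw [Function.iterate_succ_apply']
    exact ((ContDiff.iterate_deriv k hg).differentiable (by simp)).differentiableAt.hasDerivAt
  have hD0 : ∀ z : ℝ, HasDerivAt g (deriv g z) z := hD 0
  have hD1 : ∀ z : ℝ, HasDerivAt (deriv g) (deriv^[2] g z) z := hD 1
  have hU0 : ∀ z : ℝ, HasDerivAt (fun y => (1/6 : ℝ) * (deriv g y) + (-1/6 : ℝ) * (g y * g y)) ((1/6 : ℝ) * (deriv^[2] g z) + (-1/3 : ℝ) * (g z * deriv g z)) z := by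
    intro z
    exact HasDerivAt.congr_deriv ((HasDerivAt.const_mul (1/6 : ℝ) (hD1 z)).add (HasDerivAt.const_mul (-1/6 : ℝ) ((hD0 z).mul (hD0 z)))) (by ring)
  have hU1 : ∀ z : ℝ, HasDerivAt (fun y => (1/6 : ℝ) * (deriv^[2] g y) + (-1/3 : ℝ) * (g y * deriv g y)) ((1/6 : ℝ) * (deriv^[3] g z) + (-1/3 : ℝ) * (deriv g z * deriv g z) + (-1/3 : ℝ) * (g z * deriv^[2] g z)) z := by
    intro z
    exact HasDerivAt.congr_deriv ((HasDerivAt.const_mul (1/6 : ℝ) (hD 2 z)).add (HasDerivAt.const_mul (-1/3 : ℝ) ((hD0 z).mul (hD1 z)))) (by ring)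
  have hU2 : ∀ z : ℝ, HasDerivAt (fun y => (1/6 : ℝ) * (deriv^[3] g y) + (-1/3 : ℝ) * (deriv g y * deriv g y) + (-1/3 : ℝ) * (g y * deriv^[2] g y)) ((1/6 : ℝ) * (deriv^[4] g z) + (-1 : ℝ) * (deriv g z * deriv^[2] g z) + (-1/3 : ℝ) * (g z * deriv^[3] g z)) z := by
    intro z
    exact HasDerivAt.congr_deriv (((HasDerivAt.const_mul (1/6 : ℝ) (hD 3 z)).add (HasDerivAt.const_mul (-1/3 : ℝ) ((hD1 z).mul (hD1 z)))).add (HasDerivAt.const_mul (-1/3 : ℝ) ((hD0 z).mul (hD 2 z)))) (by ring)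
  have hU3 : ∀ z : ℝ, HasDerivAt (fun y => (1/6 : ℝ) * (deriv^[4] g y) + (-1 : ℝ) * (deriv g y * deriv^[2] g y) + (-1/3 : ℝ) * (g y * deriv^[3] g y)) ((1/6 : ℝ) * (deriv^[5] g z) + (-1 : ℝ) * (deriv^[2] g z * deriv^[2] g z) + (-4/3 : ℝ) * (deriv g z * deriv^[3] g z) + (-1/3 : ℝ) * (g z * deriv^[4] g z)) z := by
    intro z
    exact HasDerivAt.congr_deriv (((HasDerivAt.const_mul (1/6 : ℝ) (hD 4 z)).add (HasDerivAt.const_mul (-1 : ℝ) ((hD1 z).mul (hD 2 z)))).add (HasDerivAt.const_mul (-1/3 : ℝ) ((hD0 z).mul (hD 3 z)))) (by ring)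
  have hU4 : ∀ z : ℝ, HasDerivAt (fun y => (1/6 : ℝ) * (deriv^[5] g y) + (-1 : ℝ) * (deriv^[2] g y * deriv^[2] g y) + (-4/3 : ℝ) * (deriv g y * deriv^[3] g y) + (-1/3 : ℝ) * (g y * deriv^[4] g y)) ((1/6 : ℝ) * (deriv^[6] g z) + (-10/3 : ℝ) * (deriv^[2] g z * deriv^[3] g z) + (-5/3 : ℝ) * (deriv g z * deriv^[4] g z) + (-1/3 : ℝ) * (g z * deriv^[5] g z)) z := by
    intro z
    exact HasDerivAt.congr_deriv ((((HasDerivAt.const_mul (1/6 : ℝ) (hD 5 z)).add (HasDerivAt.const_mul (-1 : ℝ) ((hD 2 z).mul (hD 2 z)))).add (HasDerivAt.const_mul (-4/3 : ℝ) ((hD1 z).mul (hD 3 z)))).add (HasDerivAt.const_mul (-1/3 : ℝ) ((hD0 z).mul (hD 4 z)))) (by ring)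
  have hG0 : ∀ z : ℝ, HasDerivAt (fun y => (5 : ℝ) * (deriv g y * deriv^[2] g y) + (5 : ℝ) * (g y * deriv g y * deriv g y) + (5 : ℝ) * (g y * g y * deriv^[2] g y) + (-1 : ℝ) * (g y * g y * g y * g y * g y)) ((5 : ℝ) * (deriv^[2] g z * deriv^[2] g z) + (5 : ℝ) * (deriv g z * deriv^[3] g z) + (5 : ℝ) * (deriv g z * deriv g z * deriv g z) + (20 : ℝ) * (g z * deriv g z * deriv^[2] g z) + (5 : ℝ) * (g z * g z * deriv^[3] g z) + (-5 : ℝ) * (g z * g z * g z * g z * deriv g z)) z := by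
    intro z
    exact HasDerivAt.congr_deriv ((((HasDerivAt.const_mul (5 : ℝ) ((hD1 z).mul (hD 2 z))).add (HasDerivAt.const_mul (5 : ℝ) (((hD0 z).mul (hD1 z)).mul (hD1 z)))).add (HasDerivAt.const_mul (5 : ℝ) (((hD0 z).mul (hD0 z)).mul (hD 2 z)))).add (HasDerivAt.const_mul (-1 : ℝ) (((((hD0 z).mul (hD0 z)).mul (hD0 z)).mul (hD0 z)).mul (hD0 z)))) (by simp only [Pi.mul_apply]; ring)
  have hN0 : ∀ z : ℝ, HasDerivAt (fun y => (-1 : ℝ) * (deriv^[5] g y) + (5 : ℝ) * (deriv^[2] g y * deriv^[2] g y) + (5 : ℝ) * (deriv g y * deriv^[3] g y) + (5 : ℝ) * (deriv g y * deriv g y * deriv g y) + (20 : ℝ) * (g y * deriv g y * deriv^[2] g y) + (5 : ℝ) * (g y * g y * deriv^[3] g y) + (-5 : ℝ) * (g y * g y * g y * g y * deriv g y)) ((-1 : ℝ) * (deriv^[6] g z) + (15 : ℝ) * (deriv^[2] g z * deriv^[3] g z) + (5 : ℝ) * (deriv g z * deriv^[4] g z) + (35 : ℝ) * (deriv g z *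 deriv g z * deriv^[2] g z) + (20 : ℝ) * (g z * deriv^[2] g z * deriv^[2] g z) + (30 : ℝ) * (g z * deriv g z * deriv^[3] g z) + (5 : ℝ) * (g z * g z * deriv^[4] g z) + (-20 : ℝ) * (g z * g z * g z * deriv g z * deriv g z) + (-5 : ℝ) * (g z * g z * g z * g z * deriv^[2] g z)) z := by
    intro z
    exact HasDerivAt.congr_deriv (((((((HasDerivAt.const_mul (-1 : ℝ) (hD 5 z)).add (HasDerivAt.const_mul (5 : ℝ) ((hD 2 z).mul (hD 2 z)))).add (HasDerivAt.const_mul (5 : ℝ) ((hD1 z).mul (hD 3 z)))).add (HasDerivAt.const_mul (5 : ℝ) (((hD1 z).mul (hD1 z)).mul (hD1 z)))).add (HasDerivAt.const_mul (20 : ℝ) (((hD0 z).mul (hD1 z)).mul (hD 2 z)))).add (HasDerivAt.const_mul (5 : ℝ) (((hD0 z).mul (hD0 z)).mul (hD 3 z)))).add (HasDerivAt.const_mul (-5 : ℝ) (((((hD0 z).mul (hD0 z)).mul (hD0 z)).mul (hD0 z)).mul (hD1 z)))) (by simp only [Pi.mul_apply]; ring)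
  have e1 : ∀ z : ℝ, deriv^[1] (fun y => (1/6 : ℝ) * (deriv g y) + (-1/6 : ℝ) * (g y * g y)) z = (1/6 : ℝ) * (deriv^[2] g z) + (-1/3 : ℝ) * (g z * deriv g z) := by
    intro z
    rw [Function.iterate_one]
    exact (hU0 z).deriv
  have e2 : ∀ z : ℝ, deriv^[2] (fun y => (1/6 : ℝ) * (deriv g y) + (-1/6 : ℝ) * (g y * g y)) z = (1/6 : ℝ) * (deriv^[3] g z) + (-1/3 : ℝ) * (deriv g z * deriv g z) + (-1/3 : ℝ) * (g z * deriv^[2] g z) := by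
    intro z
    show deriv^[1+1] (fun y => (1/6 : ℝ) * (deriv g y) + (-1/6 : ℝ) * (g y * g y)) z = _
    rw [Function.iterate_succ_apply']
    rw [show deriv^[1] (fun y => (1/6 : ℝ) * (deriv g y) + (-1/6 : ℝ) * (g y * g y)) = (fun y => (1/6 : ℝ) * (deriv^[2] g y) + (-1/3 : ℝ) * (g y * deriv g y)) from funext e1]
    exact (hU1 z).deriv
  have e3 : ∀ z : ℝ, deriv^[3] (fun y => (1/6 : ℝ) * (deriv g y) + (-1/6 : ℝ) * (g y * g y)) z = (1/6 : ℝ) * (deriv^[4] g z) + (-1 : ℝ) * (deriv g z * deriv^[2] g z) + (-1/3 : ℝ) * (g z * deriv^[3] g z) := by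
    intro z
    show deriv^[2+1] (fun y => (1/6 : ℝ) * (deriv g y) + (-1/6 : ℝ) * (g y * g y)) z = _
    rw [Function.iterate_succ_apply']
    rw [show deriv^[2] (fun y => (1/6 : ℝ) * (deriv g y) + (-1/6 : ℝ) * (g y * g y)) = (fun y => (1/6 : ℝ) * (deriv^[3] g y) + (-1/3 : ℝ) * (deriv g y * deriv g y) + (-1/3 : ℝ) * (g y * deriv^[2] g y)) from funext e2]
    exact (hU2 z).deriv
  have e4 : ∀ z : ℝ, deriv^[4] (fun y => (1/6 : ℝ) * (deriv g y) + (-1/6 : ℝ) * (g y * g y)) z = (1/6 : ℝ) * (deriv^[5] g z) + (-1 : ℝ) * (deriv^[2] g z * deriv^[2] g z) + (-4/3 : ℝ) * (deriv g z * deriv^[3] g z) + (-1/3 : ℝ) * (g z * deriv^[4] g z) := by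
    intro z
    show deriv^[3+1] (fun y => (1/6 : ℝ) * (deriv g y) + (-1/6 : ℝ) * (g y * g y)) z = _
    rw [Function.iterate_succ_apply']
    rw [show deriv^[3] (fun y => (1/6 : ℝ) * (deriv g y) + (-1/6 : ℝ) * (g y * g y)) = (fun y => (1/6 : ℝ) * (deriv^[4] g y) + (-1 : ℝ) * (deriv g y * deriv^[2] g y) + (-1/3 : ℝ) * (g y * deriv^[3] g y)) from funext e3]
    exact (hU3 z).deriv
  have e5 : ∀ z : ℝ, deriv^[5] (fun y => (1/6 : ℝ) * (deriv g y) + (-1/6 : ℝ) * (g y * g y)) z = (1/6 : ℝ) * (deriv^[6] g z) + (-10/3 : ℝ) * (deriv^[2] g z * deriv^[3] g z) + (-5/3 : ℝ) * (deriv g z * deriv^[4] g z) + (-1/3 : ℝ) * (g z * deriv^[5] g z) := by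
    intro z
    show deriv^[4+1] (fun y => (1/6 : ℝ) * (deriv g y) + (-1/6 : ℝ) * (g y * g y)) z = _
    rw [Function.iterate_succ_apply']
    rw [show deriv^[4] (fun y => (1/6 : ℝ) * (deriv g y) + (-1/6 : ℝ) * (g y * g y)) = (fun y => (1/6 : ℝ) * (deriv^[5] g y) + (-1 : ℝ) * (deriv^[2] g y * deriv^[2] g y) + (-4/3 : ℝ) * (deriv g y * deriv^[3] g y) + (-1/3 : ℝ) * (g y * deriv^[4] g y)) from funext e4]
    exact (hU4 z).deriv
  exact ⟨fun x => (hU0 x).deriv, e2, e3, e5, fun x => (hG0 x).deriv, fun x => (hN0 x).deriv⟩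

/-- If `w` is a smooth solution of the modified SK–KK equation, then
`u = (1/6)(w_x − w²)` is a smooth solution of the Sawada–Kotera equation. -/
theorem miura_mskkk_to_sk (w : ℝ × ℝ → ℝ) (hw : ContDiff ℝ (⊤ : ℕ∞) w)
    (hsol : ∀ p : ℝ × ℝ,
      pdt w p + pdx^[5] w p
        - pdx (fun q => 5 * pdx w q * pdx^[2] w q + 5 * w q * (pdx w q) ^ 2
            + 5 * (w q) ^ 2 * pdx^[2] w q - (w q) ^ 5) p = 0) :
    ContDiff ℝ (⊤ : ℕ∞) (miuraSK w) ∧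
    ∀ p : ℝ × ℝ,
      pdt (miuraSK w) p + pdx^[5] (miuraSK w) p
        + 30 * (miuraSK w p * pdx^[3] (miuraSK w) p
            + pdx (miuraSK w) p * pdx^[2] (miuraSK w) p)
        + 180 * (miuraSK w p) ^ 2 * pdx (miuraSK w) p = 0 := by
  constructor
  · show ContDiff ℝ (⊤ : ℕ∞) fun p => 1 / 6 * (pdx w p - w p ^ 2)
    exact contDiff_const.mul ((contDiff_pdx_top w hw).sub (hw.pow 2))
  · intro p
    obtain ⟨x, t⟩ := p
    have hg : ContDiff ℝ (⊤ : ℕ∞) (fun y => w (y, t)) :=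
      (hw.of_le (by simp)).comp (contDiff_id.prodMk contDiff_const)
    obtain ⟨e1, e2, e3, e5, eg, en⟩ := aux_chain (fun y => w (y, t)) hg
    have hpt : ∀ q : ℝ × ℝ, pdt w q = -(pdx^[5] w q) + pdx (fun q => 5 * pdx w q * pdx^[2] w q + 5 * w q * (pdx w q) ^ 2 + 5 * (w q) ^ 2 * pdx^[2] w q - (w q) ^ 5) q := by
      intro q
      have h := hsol q
      linarith
    have hslice : (fun y => miuraSK w (y, t)) = (fun y => (1/6 : ℝ) * (deriv (fun z => w (z, t)) y) + (-1/6 : ℝ) * (w (y, t) * w (y, t))) := by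
      funext y
      show 1 / 6 * (deriv (fun z => w (z, t)) y - w (y, t) ^ 2) = _
      ring
    have hslG : (fun z => 5 * pdx w (z, t) * pdx^[2] w (z, t) + 5 * w (z, t) * pdx w (z, t) ^ 2 + 5 * w (z, t) ^ 2 * pdx^[2] w (z, t) - w (z, t) ^ 5) = (fun y => (5 : ℝ) * (deriv (fun z => w (z, t)) y * deriv^[2] (fun z => w (z, t)) y) + (5 : ℝ) * (w (y, t) * deriv (fun z => w (z, t)) y * deriv (fun z => w (z, t)) y) + (5 : ℝ) * (w (y, t) * w (y, t) * deriv^[2] (fun z => w (z, t)) y) + (-1 : ℝ) * (w (y, t) * w (y, t) * w (y, t) * w (y, t) * w (y, t))) := by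
      funext z
      rw [pdx_iter_slice w 2 z t]
      show 5 * deriv (fun a => w (a, t)) z * deriv^[2] (fun a => w (a, t)) z + 5 * w (z, t) * deriv (fun a => w (a, t)) z ^ 2 + 5 * w (z, t) ^ 2 * deriv^[2] (fun a => w (a, t)) z - w (z, t) ^ 5 = (5 : ℝ) * (deriv (fun z => w (z, t)) z * deriv^[2] (fun z => w (z, t)) z) + (5 : ℝ) * (w (z, t) * deriv (fun z => w (z, t)) z * deriv (fun z => w (z, t)) z) + (5 : ℝ) * (w (z, t) * w (z, t) * deriv^[2] (fun z => w (z, t)) z) + (-1 : ℝ) * (w (z, t) * w (z, t) * w (z, t) * w (z, t) * w (z, t))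
      ring
    have hGx : ∀ y : ℝ, pdx (fun q => 5 * pdx w q * pdx^[2] w q + 5 * w q * (pdx w q) ^ 2 + 5 * (w q) ^ 2 * pdx^[2] w q - (w q) ^ 5) (y, t) = deriv (fun y => (5 : ℝ) * (deriv (fun z => w (z, t)) y * deriv^[2] (fun z => w (z, t)) y) + (5 : ℝ) * (w (y, t) * deriv (fun z => w (z, t)) y * deriv (fun z => w (z, t)) y) + (5 : ℝ) * (w (y, t) * w (y, t) * deriv^[2] (fun z => w (z, t)) y) + (-1 : ℝ) * (w (y, t) * w (y, t) * w (y, t) * w (y, t) * w (y, t))) y := by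
      intro y
      show deriv (fun z => 5 * pdx w (z, t) * pdx^[2] w (z, t) + 5 * w (z, t) * pdx w (z, t) ^ 2 + 5 * w (z, t) ^ 2 * pdx^[2] w (z, t) - w (z, t) ^ 5) y = _
      rw [hslG]
    have hGval : ∀ y : ℝ, pdx (fun q => 5 * pdx w q * pdx^[2] w q + 5 * w q * (pdx w q) ^ 2 + 5 * (w q) ^ 2 * pdx^[2] w q - (w q) ^ 5) (y, t) = (5 : ℝ) * (deriv^[2] (fun z => w (z, t)) y * deriv^[2] (fun z => w (z, t)) y) + (5 : ℝ) * (deriv (fun z => w (z, t)) y * deriv^[3] (fun z => w (z, t)) y) + (5 : ℝ) * (deriv (fun z => w (z, t)) y * deriv (fun z => w (z, t)) y * deriv (fun z => w (z, t)) y) + (20 : ℝ) * (w (y, t) * deriv (fun z => w (z, t)) y * deriv^[2] (fun z => w (z, t)) y) + (5 : ℝ) * (w (y, t) * w (y, t) * deriv^[3] (fun z => w (z, t)) y) + (-5 : ℝ) * (w (y, t) * w (y, t) * w (y, t) * w (y, t) * deriv (fun z => w (z, t)) y) := by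
      intro y
      rw [hGx y]
      exact eg y
    have hdA : DifferentiableAt ℝ (fun s => pdx w (x, s)) t :=
      ((contDiff_pdx_top w hw).differentiable (by simp) (x, t)).comp t
        ((differentiableAt_const x).prodMk differentiableAt_id)
    have hA : HasDerivAt (fun s => pdx w (x, s)) (pdt (pdx w) (x, t)) t := hdA.hasDerivAt
    have hdB : DifferentiableAt ℝ (fun s => w (x, s)) t :=
      (hw.differentiable (by simp) (x, t)).comp t
        ((differentiableAt_const x).prodMk differentiableAt_id)
    have hB : HasDerivAt (fun s => w (x, s)) (pdt w (x, t)) t := hdB.hasDerivAt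
    have hT1 : pdt (miuraSK w) (x, t) = 1 / 6 * (pdt (pdx w) (x, t) - 2 * w (x, t) * pdt w (x, t)) := by
      have h := HasDerivAt.congr_deriv ((hA.sub (hB.pow 2)).const_mul ((1 : ℝ)/6))
        (show _ = 1 / 6 * (pdt (pdx w) (x, t) - 2 * w (x, t) * pdt w (x, t)) by push_cast; ring)
      exact h.deriv
    have hClair := clairaut w hw (x, t)
    have hT1b : pdx (pdt w) (x, t) = deriv (fun y => -(pdx^[5] w (y, t)) + pdx (fun q => 5 * pdx w q * pdx^[2] w q + 5 * w q * (pdx w q) ^ 2 + 5 * (w q) ^ 2 * pdx^[2] w q - (w q) ^ 5) (y, t)) x := by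
      show deriv (fun y => pdt w (y, t)) x = _
      congr 1
      funext y
      exact hpt (y, t)
    have hNfun : (fun y => -(pdx^[5] w (y, t)) + pdx (fun q => 5 * pdx w q * pdx^[2] w q + 5 * w q * (pdx w q) ^ 2 + 5 * (w q) ^ 2 * pdx^[2] w q - (w q) ^ 5) (y, t)) = (fun y => (-1 : ℝ) * (deriv^[5] (fun z => w (z, t)) y) + (5 : ℝ) * (deriv^[2] (fun z => w (z, t)) y * deriv^[2] (fun z => w (z, t)) y) + (5 : ℝ) * (deriv (fun z => w (z, t)) y * deriv^[3] (fun z => w (z, t)) y) + (5 : ℝ) * (deriv (fun z => w (z, t)) y * deriv (fun z => w (z, t)) y * deriv (fun z => w (z, t)) y) + (20 : ℝ) * (w (y, t) * deriv (fun z => w (z, t)) y * deriv^[2] (fun z => w (z, t)) y) + (5 : ℝ) * (w (y, t) * w (y, t) * deriv^[3] (fun z => w (z, t)) y) + (-5 : ℝ) * (w (y, t) * w (y, t) * w (y, t) * w (y, t) * deriv (fun z => w (z, t)) y)) := by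
      funext y
      rw [pdx_iter_slice w 5 y t, hGval y]
      show -(deriv^[5] (fun z => w (z, t)) y) + ((5 : ℝ) * (deriv^[2] (fun z => w (z, t)) y * deriv^[2] (fun z => w (z, t)) y) + (5 : ℝ) * (deriv (fun z => w (z, t)) y * deriv^[3] (fun z => w (z, t)) y) + (5 : ℝ) * (deriv (fun z => w (z, t)) y * deriv (fun z => w (z, t)) y * deriv (fun z => w (z, t)) y) + (20 : ℝ) * (w (y, t) * deriv (fun z => w (z, t)) y * deriv^[2] (fun z => w (z, t)) y) + (5 : ℝ) * (w (y, t) * w (y, t) * deriv^[3] (fun z => w (z, t)) y) + (-5 : ℝ) * (w (y, t) * w (y, t) * w (y, t) * w (y, t) * deriv (fun z => w (z, t)) y)) = (-1 : ℝ) * (deriv^[5] (fun z => w (z, t)) y) + (5 : ℝ) * (deriv^[2] (fun z => w (z, t)) y * deriv^[2] (fun z => w (z, t)) y) + (5 : ℝ) * (deriv (fun z => w (z, t)) y * deriv^[3] (fun z => w (z, t)) y) + (5 : ℝ) * (deriv (fun z => w (z, t)) y * deriv (fun z => w (z, t)) y * deriv (fun z => w (z, t)) y) + (20 : ℝ) *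 (w (y, t) * deriv (fun z => w (z, t)) y * deriv^[2] (fun z => w (z, t)) y) + (5 : ℝ) * (w (y, t) * w (y, t) * deriv^[3] (fun z => w (z, t)) y) + (-5 : ℝ) * (w (y, t) * w (y, t) * w (y, t) * w (y, t) * deriv (fun z => w (z, t)) y)
      ring
    have hT1c : deriv (fun y => -(pdx^[5] w (y, t)) + pdx (fun q => 5 * pdx w q * pdx^[2] w q + 5 * w q * (pdx w q) ^ 2 + 5 * (w q) ^ 2 * pdx^[2] w q - (w q) ^ 5) (y, t)) x = (-1 : ℝ) * (deriv^[6] (fun z => w (z, t)) x) + (15 : ℝ) * (deriv^[2] (fun z => w (z, t)) x * deriv^[3] (fun z => w (z, t)) x) + (5 : ℝ) * (deriv (fun z => w (z, t)) x * deriv^[4] (fun z => w (z, t)) x) + (35 : ℝ) * (deriv (fun z => w (z, t)) x * deriv (fun z => w (z, t)) x * deriv^[2] (fun z => w (z, t)) x) + (20 : ℝ) * (w (x, t) * deriv^[2] (fun z => w (z, t)) x * deriv^[2] (fun z => w (z, t)) x) + (30 : ℝ) * (w (x, t) * deriv (fun z => w (z, t)) x * deriv^[3] (fun z => w (z, t))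 x) + (5 : ℝ) * (w (x, t) * w (x, t) * deriv^[4] (fun z => w (z, t)) x) + (-20 : ℝ) * (w (x, t) * w (x, t) * w (x, t) * deriv (fun z => w (z, t)) x * deriv (fun z => w (z, t)) x) + (-5 : ℝ) * (w (x, t) * w (x, t) * w (x, t) * w (x, t) * deriv^[2] (fun z => w (z, t)) x) := by
      rw [hNfun]
      exact en x
    have hT2 : pdx^[5] (miuraSK w) (x, t) = (1/6 : ℝ) * (deriv^[6] (fun z => w (z, t)) x) + (-10/3 : ℝ) * (deriv^[2] (fun z => w (z, t)) x * deriv^[3] (fun z => w (z, t)) x) + (-5/3 : ℝ) * (deriv (fun z => w (z, t)) x * deriv^[4] (fun z => w (z, t)) x) + (-1/3 : ℝ) * (w (x, t) * deriv^[5] (fun z => w (z, t)) x) := by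
      rw [pdx_iter_slice (miuraSK w) 5 x t, hslice]
      exact e5 x
    have hT4 : pdx^[3] (miuraSK w) (x, t) = (1/6 : ℝ) * (deriv^[4] (fun z => w (z, t)) x) + (-1 : ℝ) * (deriv (fun z => w (z, t)) x * deriv^[2] (fun z => w (z, t)) x) + (-1/3 : ℝ) * (w (x, t) * deriv^[3] (fun z => w (z, t)) x) := by
      rw [pdx_iter_slice (miuraSK w) 3 x t, hslice]
      exact e3 x
    have hT6 : pdx^[2] (miuraSK w) (x, t) = (1/6 : ℝ) * (deriv^[3] (fun z => w (z, t)) x) + (-1/3 : ℝ) * (deriv (fun z => w (z, t)) x * deriv (fun z => w (z, t)) x) + (-1/3 : ℝ) * (w (x, t) * deriv^[2] (fun z => w (z, t)) x) := by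
      rw [pdx_iter_slice (miuraSK w) 2 x t, hslice]
      exact e2 x
    have hT5 : pdx (miuraSK w) (x, t) = (1/6 : ℝ) * (deriv^[2] (fun z => w (z, t)) x) + (-1/3 : ℝ) * (w (x, t) * deriv (fun z => w (z, t)) x) := by
      show deriv (fun y => miuraSK w (y, t)) x = _
      rw [hslice]
      exact e1 x
    have hT3 : miuraSK w (x, t) = (1/6 : ℝ) * (deriv (fun z => w (z, t)) x) + (-1/6 : ℝ) * (w (x, t) * w (x, t)) := by
      show 1 / 6 * (deriv (fun z => w (z, t)) x - w (x, t) ^ 2) = _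
      ring
    rw [hT1, hClair, hT1b, hT1c, hT2, hT3, hT4, hT5, hT6, hpt (x, t),
      pdx_iter_slice w 5 x t, hGval x]
    ring
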